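/- arXiv:1505.02568 — 3 statements merged into one kernel-verified Lean document; each statement's English description precedes it below -/
import Mathlib

section
/- If there exist real numbers χ₁,...,χ_m ∈ (0,1) such that for every i, Pr(E_i) ≤ χ_i · ∏_{j ∈ N_i} (1 - χ_j), where N_i is the neighborhood of E_i in the dependency graph (with i ∈ N_i), then Pr(⋂_{i=1}^m E_i^c) > 0. -/
open MeasureTheory ProbabilityTheory

/-!
Write `avoid E S = ⋂ j ∈ S, (E j)ᶜ`. By strong induction on `S`,
`Pr(E i ∩ avoid E S) ≤ χ i · Pr(avoid E S)`: discarding the events of `S` in `N i` only enlarges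
the left side, the remaining events are determined by variables disjoint from those of `E i`, so
independence factors it as `Pr(E i) · Pr(avoid E (S \ N i))`, and putting the discarded events
back one at a time costs at most a factor `1 - χ j` each, by the induction hypothesis.
Telescoping over all events gives `Pr(⋂ i, (E i)ᶜ) ≥ ∏ j, (1 - χ j) > 0`.
Independence enters only through `Pr(E i ∩ avoid E S) ≤ Pr(E i) · Pr(avoid E S)` for `S`
disjoint from `N i`, so the core argument is the lopsided local lemma.
-/

namespace LovaszLocalLemma

open Finset

section Avoid

variable {Ω ι : Type*} (E : ι → Set Ω)

def avoid (S : Finset ι) : Set Ω := ⋂ j ∈ S, (E j)ᶜ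

@[simp] lemma avoid_empty : avoid E ∅ = Set.univ := by simp [avoid]

lemma avoid_insert [DecidableEq ι] (j : ι) (S : Finset ι) :
    avoid E (insert j S) = (E j)ᶜ ∩ avoid E S :=
  set_biInter_insert j S _

lemma avoid_antitone : Antitone (avoid E) :=
  fun _ _ hST => Set.biInter_subset_biInter_left hST

@[simp] lemma avoid_univ [Fintype ι] : avoid E univ = ⋂ i, (E i)ᶜ := by simp [avoid]

lemma measurableSet_avoid {m : MeasurableSpace Ω} {S : Finset ι}
    (h : ∀ j ∈ S, MeasurableSet[m] (E j)) : MeasurableSet[m] (avoid E S) :=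
  S.measurableSet_biInter fun j hj => (h j hj).compl

end Avoid

section Lopsided

variable {Ω ι : Type*} [DecidableEq ι] [MeasurableSpace Ω] {μ : Measure Ω} [IsFiniteMeasure μ]
  {E : ι → Set Ω} {χ : ι → ℝ}

lemma one_sub_mul_le_measureReal_avoid_insert {j : ι} {T : Finset ι} {c : ℝ}
    (hE : MeasurableSet (E j)) (h : μ.real (E j ∩ avoid E T) ≤ c * μ.real (avoid E T)) :
    (1 - c) * μ.real (avoid E T) ≤ μ.real (avoid E (insert j T)) := by
  have hsplit :
      μ.real (E j ∩ avoid E T) + μ.real (avoid E (insert j T)) = μ.real (avoid E T) := by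
    rw [avoid_insert, Set.inter_comm (E j)ᶜ, ← Set.sdiff_eq, Set.inter_comm]
    exact measureReal_inter_add_sdiff hE
  linarith

lemma prod_one_sub_mul_measureReal_avoid_le (hE : ∀ j, MeasurableSet (E j))
    (hχ1 : ∀ j, χ j ≤ 1) {U T : Finset ι} (hUT : Disjoint U T)
    (hbd : ∀ T' ⊂ U ∪ T, ∀ i, μ.real (E i ∩ avoid E T') ≤ χ i * μ.real (avoid E T')) :
    (∏ j ∈ U, (1 - χ j)) * μ.real (avoid E T) ≤ μ.real (avoid E (U ∪ T)) := by
  induction U using Finset.induction_on generalizing T with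
  | empty => simp
  | insert j U hjU ih =>
    have hjT : j ∉ T := disjoint_left.mp hUT (mem_insert_self j U)
    have hunion : U ∪ insert j T = insert j U ∪ T := by rw [union_insert, insert_union]
    have hTsub : T ⊂ insert j U ∪ T :=
      (ssubset_iff_of_subset subset_union_right).mpr ⟨j, by simp, hjT⟩
    have hstep := one_sub_mul_le_measureReal_avoid_insert (hE j) (hbd T hTsub j)
    have hrest := ih (T := insert j T)
      (disjoint_insert_right.mpr ⟨hjU, (disjoint_insert_left.mp hUT).2⟩) (hunion ▸ hbd)
    rw [prod_insert hjU, mul_comm (1 - χ j), mul_assoc, ← hunion]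
    calc (∏ x ∈ U, (1 - χ x)) * ((1 - χ j) * μ.real (avoid E T))
        ≤ (∏ x ∈ U, (1 - χ x)) * μ.real (avoid E (insert j T)) := by
          gcongr
          exact prod_nonneg fun x _ => sub_nonneg.mpr (hχ1 x)
      _ ≤ μ.real (avoid E (U ∪ insert j T)) := hrest

variable {N : ι → Finset ι}

lemma measureReal_inter_avoid_le (hE : ∀ j, MeasurableSet (E j)) (hχ0 : ∀ j, 0 ≤ χ j)
    (hχ1 : ∀ j, χ j ≤ 1)
    (hlop : ∀ i S, Disjoint S (N i) →
      μ.real (E i ∩ avoid E S) ≤ μ.real (E i) * μ.real (avoid E S))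
    (hbound : ∀ i, μ.real (E i) ≤ χ i * ∏ j ∈ N i, (1 - χ j)) (S : Finset ι) (i : ι) :
    μ.real (E i ∩ avoid E S) ≤ χ i * μ.real (avoid E S) := by
  induction S using Finset.strongInduction generalizing i with
  | H S ih =>
  have hchain : (∏ j ∈ S ∩ N i, (1 - χ j)) * μ.real (avoid E (S \ N i))
      ≤ μ.real (avoid E S) := by
    have hS : S ∩ N i ∪ S \ N i = S := sup_inf_sdiff S (N i)
    have h := prod_one_sub_mul_measureReal_avoid_le (μ := μ) hE hχ1
      (disjoint_sdiff_inter S (N i)).symm (by rwa [hS])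
    rwa [hS] at h
  have hprod : ∏ j ∈ N i, (1 - χ j) ≤ ∏ j ∈ S ∩ N i, (1 - χ j) :=
    prod_anti_set_of_le_one (fun j => sub_nonneg.mpr (hχ1 j))
      (fun j => sub_le_self 1 (hχ0 j)) inter_subset_right
  calc μ.real (E i ∩ avoid E S)
      ≤ μ.real (E i ∩ avoid E (S \ N i)) :=
        measureReal_mono (Set.inter_subset_inter_right _ (avoid_antitone E sdiff_subset))
    _ ≤ μ.real (E i) * μ.real (avoid E (S \ N i)) := hlop i _ sdiff_disjoint
    _ ≤ χ i * (∏ j ∈ S ∩ N i, (1 - χ j)) * μ.real (avoid E (S \ N i)) := by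
        gcongr
        exact (hbound i).trans (by gcongr; exact hχ0 i)
    _ ≤ χ i * μ.real (avoid E S) := by
        rw [mul_assoc]
        exact mul_le_mul_of_nonneg_left hchain (hχ0 i)

theorem prod_one_sub_le_measureReal_iInter_compl [Fintype ι] [IsProbabilityMeasure μ]
    (hE : ∀ j, MeasurableSet (E j)) (hχ0 : ∀ j, 0 ≤ χ j) (hχ1 : ∀ j, χ j ≤ 1)
    (hlop : ∀ i S, Disjoint S (N i) →
      μ.real (E i ∩ avoid E S) ≤ μ.real (E i) * μ.real (avoid E S))
    (hbound : ∀ i, μ.real (E i) ≤ χ i * ∏ j ∈ N i, (1 - χ j)) :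
    ∏ j, (1 - χ j) ≤ μ.real (⋂ i, (E i)ᶜ) := by
  have h := prod_one_sub_mul_measureReal_avoid_le (U := univ) (T := ∅) hE hχ1
    (disjoint_empty_right _) fun T _ => measureReal_inter_avoid_le hE hχ0 hχ1 hlop hbound T
  simpa using h

end Lopsided

section Scopes

variable {Ω ι : Type*} {D : ι → Type*} [∀ i, MeasurableSpace (D i)] (X : ∀ i, Ω → D i)

abbrev scopeSigma (s : Finset ι) : MeasurableSpace Ω :=
  MeasurableSpace.comap (fun ω (i : s) => X i ω) inferInstance

lemma scopeSigma_mono : Monotone (scopeSigma X) := fun _ t hst => by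
  change MeasurableSpace.comap (Finset.restrict₂ hst ∘ fun ω (i : t) => X i ω) _ ≤ _
  rw [← MeasurableSpace.comap_comp]
  exact MeasurableSpace.comap_mono (Finset.measurable_restrict₂ hst).comap_le

variable [MeasurableSpace Ω] {X}

lemma scopeSigma_le (hX : ∀ i, Measurable (X i)) (s : Finset ι) :
    scopeSigma X s ≤ ‹MeasurableSpace Ω› :=
  (measurable_pi_lambda (fun ω (i : s) => X i ω) fun i => hX i).comap_le

lemma indep_scopeSigma {μ : Measure Ω} (hindep : iIndepFun X μ) (hX : ∀ i, Measurable (X i))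
    {s t : Finset ι} (hst : Disjoint s t) : Indep (scopeSigma X s) (scopeSigma X t) μ :=
  (IndepFun_iff_Indep _ _ _).mp (hindep.indepFun_finset s t hst hX)

lemma measureReal_inter_avoid_eq_mul [DecidableEq ι] {κ : Type*} {μ : Measure Ω}
    (hindep : iIndepFun X μ) (hX : ∀ i, Measurable (X i)) {e : κ → Finset ι} {E : κ → Set Ω}
    (hscope : ∀ j, MeasurableSet[scopeSigma X (e j)] (E j)) {i : κ} {S : Finset κ}
    (hS : ∀ j ∈ S, Disjoint (e i) (e j)) :
    μ.real (E i ∩ avoid E S) = μ.real (E i) * μ.real (avoid E S) := by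
  have hA : MeasurableSet[scopeSigma X (S.biUnion e)] (avoid E S) :=
    measurableSet_avoid E fun j hj => scopeSigma_mono X (subset_biUnion_of_mem e hj) _ (hscope j)
  have hindep_iS := indep_scopeSigma hindep hX ((disjoint_biUnion_right _ _ _).mpr hS)
  simp only [Measure.real, (Indep_iff _ _ _).mp hindep_iS _ _ (hscope i) hA, ENNReal.toReal_mul]

end Scopes

end LovaszLocalLemma

open LovaszLocalLemma in
/-- **Asymmetric Lovász Local Lemma** (variable setting).
`X i : Ω → D i` are mutually independent random variables, each event `E j` depends
only on the variables in its scope `e j` (it is measurable w.r.t. the σ-algebra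
generated by those variables), the dependency graph puts an edge between `i` and `j`
iff their scopes intersect, and `N i` is the corresponding (closed) neighborhood.
If there are `χ i ∈ (0,1)` with `Pr(E i) ≤ χ i * ∏_{j ∈ N i} (1 - χ j)` for all `i`,
then with positive probability none of the events occurs. -/
theorem asymmetric_LLL
    {Ω : Type*} [MeasurableSpace Ω] (μ : Measure Ω) [IsProbabilityMeasure μ]
    {n m : ℕ} (D : Fin n → Type*) [∀ i, MeasurableSpace (D i)]
    (X : ∀ i, Ω → D i)
    (hindep : iIndepFun X μ)
    (hmeas : ∀ i, Measurable (X i))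
    (e : Fin m → Finset (Fin n)) (E : Fin m → Set Ω)
    (hscope : ∀ j, MeasurableSet[MeasurableSpace.comap
        (fun ω => fun i : e j => X i ω) inferInstance] (E j))
    (N : Fin m → Finset (Fin m))
    (hN : ∀ i j, j ∈ N i ↔ ¬ Disjoint (e i) (e j))
    (χ : Fin m → ℝ) (hχ : ∀ i, χ i ∈ Set.Ioo (0 : ℝ) 1)
    (hbound : ∀ i, (μ (E i)).toReal ≤ χ i * ∏ j ∈ N i, (1 - χ j)) :
    0 < μ (⋂ i, (E i)ᶜ) := by
  have hE : ∀ j, MeasurableSet (E j) := fun j => scopeSigma_le hmeas (e j) _ (hscope j)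
  have hlop : ∀ i S, Disjoint S (N i) →
      μ.real (E i ∩ avoid E S) ≤ μ.real (E i) * μ.real (avoid E S) := fun i S hS =>
    (measureReal_inter_avoid_eq_mul hindep hmeas hscope fun j hj =>
      not_not.mp ((hN i j).not.mp (Finset.disjoint_left.mp hS hj))).le
  have hprod_pos : 0 < ∏ j, (1 - χ j) := Finset.prod_pos fun j _ => sub_pos.mpr (hχ j).2
  have hpos := hprod_pos.trans_le <| prod_one_sub_le_measureReal_iInter_compl hE
    (fun j => (hχ j).1.le) (fun j => (hχ j).2.le) hlop hbound
  exact (ENNReal.toReal_pos_iff.mp hpos).1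
end

section
/- Let χ₁,...,χ_m ∈ (0,1) and let N_i ⊆ {1,...,m} with i ∈ N_i for all i. For nonnegative integers n₁,...,n_m with ∑ n_i = n, let s_i = ∑_{j ∈ N_i} n_j. Then ∏_{i=1}^m [ χ_i^{n_i} · (1-χ_i)^{s_i} · C(s_i, n_i) ] ≤ ∏_{i=1}^m (1-χ_i)^{n_i} ≤ M^n, where M = max_i (1-χ_i) < 1. -/
lemma binom_term_le_one {x : ℝ} (hx0 : 0 ≤ x) (hx1 : x ≤ 1) {k s : ℕ} (h : k ≤ s) :
    x ^ k * (1 - x) ^ (s - k) * (Nat.choose s k : ℝ) ≤ 1 := by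
  have h1 : (0:ℝ) ≤ 1 - x := by linarith
  have key : (x + (1 - x)) ^ s
      = ∑ j ∈ Finset.range (s+1), x ^ j * (1-x) ^ (s-j) * (Nat.choose s j : ℝ) :=
    add_pow x (1-x) s
  have hle : x ^ k * (1-x) ^ (s-k) * (Nat.choose s k : ℝ)
      ≤ ∑ j ∈ Finset.range (s+1), x ^ j * (1-x) ^ (s-j) * (Nat.choose s j : ℝ) := by
    refine Finset.single_le_sum (f := fun j => x ^ j * (1-x) ^ (s-j) * (Nat.choose s j : ℝ))
      (fun j _ => by positivity) ?_
    simpa using Nat.lt_succ_of_le h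
  have : (x + (1 - x)) ^ s = 1 := by norm_num
  linarith [hle, key ▸ this ▸ hle]

/-- **The key exponential bound.** For `χ i ∈ (0,1)`, closed neighborhoods `N`
(`i ∈ N i`), exponents `n i` with `∑ n i = n` and `s i = ∑_{j ∈ N i} n j`:
`∏_i χ_i^{n_i} (1-χ_i)^{s_i} C(s_i, n_i) ≤ ∏_i (1-χ_i)^{n_i} ≤ M^n` where
`M = max_i (1-χ_i) < 1`. -/
theorem key_exponential_bound {m : ℕ} (hm : 0 < m)
    (χ : Fin m → ℝ) (hχ : ∀ i, χ i ∈ Set.Ioo (0 : ℝ) 1)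
    (N : Fin m → Finset (Fin m)) (hself : ∀ i, i ∈ N i)
    (nn : Fin m → ℕ) (n : ℕ) (hsum : ∑ i, nn i = n) :
    let s : Fin m → ℕ := fun i => ∑ j ∈ N i, nn j
    let M : ℝ := Finset.univ.sup' (Finset.univ_nonempty_iff.2
      (Fin.pos_iff_nonempty.1 hm)) (fun i => 1 - χ i)
    (∏ i, χ i ^ nn i * (1 - χ i) ^ s i * (Nat.choose (s i) (nn i) : ℝ))
        ≤ ∏ i, (1 - χ i) ^ nn i ∧
      (∏ i, (1 - χ i) ^ nn i) ≤ M ^ n ∧ M < 1 := by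
  intro s M
  have hne : (Finset.univ : Finset (Fin m)).Nonempty :=
    Finset.univ_nonempty_iff.2 (Fin.pos_iff_nonempty.1 hm)
  have hns : ∀ i, nn i ≤ s i := fun i =>
    Finset.single_le_sum (f := nn) (fun j _ => Nat.zero_le _) (hself i)
  have hM0 : 0 ≤ M := by
    obtain ⟨i, _⟩ := hne
    exact le_trans (by linarith [(hχ i).2]) (Finset.le_sup' (fun i => 1 - χ i) (Finset.mem_univ i))
  have hM1 : M < 1 := by
    apply Finset.sup'_lt_iff hne |>.2
    intro i _
    linarith [(hχ i).1]
  refine ⟨?_, ?_, hM1⟩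
  · apply Finset.prod_le_prod
    · intro i _
      have h0 := (hχ i).1
      have h2 : (0:ℝ) ≤ 1 - χ i := by linarith [(hχ i).2]
      positivity
    · intro i _
      have h0 : 0 ≤ χ i := le_of_lt (hχ i).1
      have h1 : χ i ≤ 1 := le_of_lt (hχ i).2
      have h1x : (0:ℝ) ≤ 1 - χ i := by linarith
      have hsplit : (1 - χ i) ^ s i = (1 - χ i) ^ nn i * (1 - χ i) ^ (s i - nn i) := by
        rw [← pow_add, Nat.add_sub_cancel' (hns i)]
      calc χ i ^ nn i * (1 - χ i) ^ s i * (Nat.choose (s i) (nn i) : ℝ)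
          = (1 - χ i) ^ nn i * (χ i ^ nn i * (1 - χ i) ^ (s i - nn i) * (Nat.choose (s i) (nn i) : ℝ)) := by
            rw [hsplit]; ring
        _ ≤ (1 - χ i) ^ nn i * 1 := by
            apply mul_le_mul_of_nonneg_left (binom_term_le_one h0 h1 (hns i)) (by positivity)
        _ = (1 - χ i) ^ nn i := mul_one _
  · calc ∏ i, (1 - χ i) ^ nn i ≤ ∏ i, M ^ nn i := by
          apply Finset.prod_le_prod
          · intro i _
            have h2 : (0:ℝ) ≤ 1 - χ i := by linarith [(hχ i).2]
            positivity
          · intro i _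
            exact pow_le_pow_left₀ (by linarith [(hχ i).2])
              (Finset.le_sup' (fun i => 1 - χ i) (Finset.mem_univ i)) _
      _ = M ^ n := by rw [← hsum, ← Finset.prod_pow_eq_pow_sum]
end

section
/- Suppose for each i ∈ {1,...,m}, Q_i : ℕ → ℝ≥0 satisfies Q_{n,i} ≤ p_i · ∑_{n₁+⋯+n_l=n−1} ∏_{k=1}^l Q_{n_k,i_k} with Q_{0,j} = 1, where N_i = {i₁,...,i_l} and p_i = χ_i ∏_{j∈N_i}(1-χ_j) with χ_j ∈ (0,1). Then for all n and i, Q_{n,i} ≤ χ_i ∏_{t=2}^{n} M_t where each factor M_t ≤ max_j (1-χ_j); in particular Q_{n,i} ≤ χ_i · M^{n-1} with M = max_j(1-χ_j). -/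
/-!
The weighted partial sums `S n i = ∑_{a<n} M⁻¹^a Q (a+1) i` stay below `χ i` for every `n`.
Indeed, a truncated generating function of a convolution is at most the product of the truncated
generating functions, so the recursion gives `S (n+1) i ≤ p i ∏_{j ∈ N i} (1 + M⁻¹ S n j)`; by
induction this is at most `χ i ∏_{j ∈ N i} (1 - χ j)(1 + M⁻¹ χ j) ≤ χ i`, each factor being
at most `1` since `1 - χ j ≤ M`. The single term `a = n` of `S (n+1) i` gives
`Q (n+1) i ≤ χ i M^n`.
-/

open Finset

theorem Finset.prod_sort_get {α M : Type*} [LinearOrder α] [CommMonoid M] (s : Finset α)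
    (φ : α → M) :
    ∏ k : Fin s.card, φ ((s.sort (· ≤ ·)).get (Fin.cast (s.length_sort (· ≤ ·)).symm k)) =
      ∏ j ∈ s, φ j := by
  rw [← s.prod_coe_sort]
  exact Fintype.prod_equiv (s.orderIsoOfFin rfl).toEquiv _ _ fun _ => rfl

theorem sum_range_sum_antidiagonalTuple_le_prod {R : Type*} [CommSemiring R] [PartialOrder R]
    [IsOrderedRing R] {l : ℕ} (n : ℕ) (g : Fin l → ℕ → R) (hg : ∀ k b, 0 ≤ g k b) :
    ∑ a ∈ range n, ∑ f ∈ Nat.antidiagonalTuple l a, ∏ k, g k (f k) ≤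
      ∏ k, ∑ b ∈ range n, g k b := by
  have hdisj : (range n : Set ℕ).PairwiseDisjoint (Nat.antidiagonalTuple l) := by
    intro a _ b _ hab
    refine disjoint_left.2 fun f hfa hfb => hab ?_
    rw [← Nat.mem_antidiagonalTuple.1 hfa, Nat.mem_antidiagonalTuple.1 hfb]
  rw [← sum_biUnion hdisj, prod_univ_sum]
  refine sum_le_sum_of_subset_of_nonneg ?_ fun f _ _ => prod_nonneg fun k _ => hg k (f k)
  intro f hf
  obtain ⟨a, ha, hfa⟩ := mem_biUnion.1 hf
  refine Fintype.mem_piFinset.2 fun k => mem_range.2 (lt_of_le_of_lt ?_ (mem_range.1 ha))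
  rw [← Nat.mem_antidiagonalTuple.1 hfa]
  exact single_le_sum (fun j _ => Nat.zero_le (f j)) (mem_univ k)

theorem sum_range_pow_mul_sum_antidiagonalTuple_le_prod {R : Type*} [CommSemiring R]
    [PartialOrder R] [IsOrderedRing R] {l : ℕ} (n : ℕ) (g : Fin l → ℕ → R)
    (hg : ∀ k b, 0 ≤ g k b) {x : R} (hx : 0 ≤ x) :
    ∑ a ∈ range n, x ^ a * ∑ f ∈ Nat.antidiagonalTuple l a, ∏ k, g k (f k) ≤
      ∏ k, ∑ b ∈ range n, x ^ b * g k b := by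
  refine le_of_eq_of_le (sum_congr rfl fun a _ => ?_)
    (sum_range_sum_antidiagonalTuple_le_prod n _ fun k b => mul_nonneg (pow_nonneg hx b) (hg k b))
  rw [mul_sum]
  refine sum_congr rfl fun f hf => ?_
  rw [prod_mul_distrib, prod_pow_eq_pow_sum, Nat.mem_antidiagonalTuple.1 hf]

theorem one_sub_mul_one_add_inv_mul_le_one {χ M : ℝ} (hχ : 0 ≤ χ) (hM : 0 < M)
    (hχM : 1 - χ ≤ M) : (1 - χ) * (1 + M⁻¹ * χ) ≤ 1 := by
  have key : (1 - χ) * (M + χ) ≤ M := by nlinarith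
  calc (1 - χ) * (1 + M⁻¹ * χ) = M⁻¹ * ((1 - χ) * (M + χ)) := by field_simp
    _ ≤ M⁻¹ * M := by gcongr
    _ = 1 := inv_mul_cancel₀ hM.ne'

section Recursion

variable {ι : Type*} {χ : ι → ℝ} {M : ℝ} {l : ι → ℕ} {e : (i : ι) → Fin (l i) → ι}
  {Q : ℕ → ι → ℝ}

theorem sum_range_inv_pow_mul_le_of_recursion (hχ0 : ∀ i, 0 ≤ χ i) (hχ1 : ∀ i, χ i ≤ 1)
    (hM : 0 < M) (hχM : ∀ i, 1 - χ i ≤ M) (hQ0 : ∀ i, Q 0 i = 1) (hQ : ∀ n i, 0 ≤ Q n i)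
    (hrec : ∀ a i, Q (a + 1) i ≤ χ i * (∏ k, (1 - χ (e i k))) *
      ∑ f ∈ Nat.antidiagonalTuple (l i) a, ∏ k, Q (f k) (e i k))
    (n : ℕ) (i : ι) : ∑ a ∈ range n, M⁻¹ ^ a * Q (a + 1) i ≤ χ i := by
  induction n generalizing i with
  | zero => simpa using hχ0 i
  | succ n ih =>
    have hx : 0 ≤ M⁻¹ := inv_nonneg.2 hM.le
    have hfactor : ∀ j, ∑ b ∈ range (n + 1), M⁻¹ ^ b * Q b j ≤ 1 + M⁻¹ * χ j := fun j => by
      rw [sum_range_succ', pow_zero, hQ0, one_mul, add_comm]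
      calc 1 + ∑ b ∈ range n, M⁻¹ ^ (b + 1) * Q (b + 1) j
          = 1 + M⁻¹ * ∑ b ∈ range n, M⁻¹ ^ b * Q (b + 1) j := by
            rw [mul_sum]; simp only [pow_succ', mul_assoc]
        _ ≤ 1 + M⁻¹ * χ j := by gcongr; exact ih j
    have hc : 0 ≤ χ i * ∏ k, (1 - χ (e i k)) :=
      mul_nonneg (hχ0 i) (prod_nonneg fun k _ => sub_nonneg.2 (hχ1 _))
    calc ∑ a ∈ range (n + 1), M⁻¹ ^ a * Q (a + 1) i
        ≤ ∑ a ∈ range (n + 1), M⁻¹ ^ a * (χ i * (∏ k, (1 - χ (e i k))) *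
            ∑ f ∈ Nat.antidiagonalTuple (l i) a, ∏ k, Q (f k) (e i k)) := by
          gcongr with a; exact hrec a i
      _ = χ i * (∏ k, (1 - χ (e i k))) * ∑ a ∈ range (n + 1), M⁻¹ ^ a *
            ∑ f ∈ Nat.antidiagonalTuple (l i) a, ∏ k, Q (f k) (e i k) := by
          rw [mul_sum]; exact sum_congr rfl fun a _ => by ring
      _ ≤ χ i * (∏ k, (1 - χ (e i k))) * ∏ k, ∑ b ∈ range (n + 1), M⁻¹ ^ b * Q b (e i k) :=
          mul_le_mul_of_nonneg_left (sum_range_pow_mul_sum_antidiagonalTuple_le_prod _ _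
            (fun k b => hQ b (e i k)) hx) hc
      _ ≤ χ i * (∏ k, (1 - χ (e i k))) * ∏ k, (1 + M⁻¹ * χ (e i k)) := by
          gcongr
          · exact fun k _ => sum_nonneg fun b _ => mul_nonneg (pow_nonneg hx b) (hQ b _)
          · exact hfactor _
      _ = χ i * ∏ k, (1 - χ (e i k)) * (1 + M⁻¹ * χ (e i k)) := by
          rw [mul_assoc, prod_mul_distrib]
      _ ≤ χ i * 1 := by
          gcongr
          · exact hχ0 i
          exact prod_le_one (fun k _ => mul_nonneg (sub_nonneg.2 (hχ1 _))
              (add_nonneg zero_le_one (mul_nonneg hx (hχ0 _))))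
            fun k _ => one_sub_mul_one_add_inv_mul_le_one (hχ0 _) hM (hχM _)
      _ = χ i := mul_one _

theorem le_mul_pow_of_recursion (hχ0 : ∀ i, 0 ≤ χ i) (hχ1 : ∀ i, χ i ≤ 1)
    (hM : 0 < M) (hχM : ∀ i, 1 - χ i ≤ M) (hQ0 : ∀ i, Q 0 i = 1) (hQ : ∀ n i, 0 ≤ Q n i)
    (hrec : ∀ a i, Q (a + 1) i ≤ χ i * (∏ k, (1 - χ (e i k))) *
      ∑ f ∈ Nat.antidiagonalTuple (l i) a, ∏ k, Q (f k) (e i k))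
    (n : ℕ) (i : ι) : Q (n + 1) i ≤ χ i * M ^ n := by
  have hterm : M⁻¹ ^ n * Q (n + 1) i ≤ χ i :=
    (single_le_sum (f := fun a => M⁻¹ ^ a * Q (a + 1) i)
      (fun a _ => mul_nonneg (pow_nonneg (inv_nonneg.2 hM.le) a) (hQ _ i))
      (self_mem_range_succ n)).trans
      (sum_range_inv_pow_mul_le_of_recursion hχ0 hχ1 hM hχM hQ0 hQ hrec (n + 1) i)
  rwa [inv_pow, inv_mul_le_iff₀ (pow_pos hM n), mul_comm] at hterm

end Recursion

theorem Q_exponential_decay_general {m : ℕ} (hm : 0 < m)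
    (χ : Fin m → ℝ) (hχ : ∀ i, χ i ∈ Set.Ioo (0 : ℝ) 1)
    (N : Fin m → Finset (Fin m))
    (p : Fin m → ℝ) (hp : ∀ i, p i = χ i * ∏ j ∈ N i, (1 - χ j))
    (Q : ℕ → Fin m → ℝ) (hQ0 : ∀ j, Q 0 j = 1) (hQnonneg : ∀ n i, 0 ≤ Q n i)
    (hrec : ∀ (n : ℕ), 1 ≤ n → ∀ i : Fin m,
      Q n i ≤ p i *
        ∑ f ∈ Finset.Nat.antidiagonalTuple (N i).card (n - 1),
          ∏ k : Fin (N i).card,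
            Q (f k) (((N i).sort (· ≤ ·)).get
              (Fin.cast ((N i).length_sort (· ≤ ·)).symm k))) :
    ∀ (n : ℕ), 1 ≤ n → ∀ i : Fin m,
      Q n i ≤ χ i *
        (Finset.univ.sup' (Finset.univ_nonempty_iff.2 (Fin.pos_iff_nonempty.1 hm))
          (fun j => 1 - χ j)) ^ (n - 1) := by
  intro n hn i
  set M := Finset.univ.sup' (Finset.univ_nonempty_iff.2 (Fin.pos_iff_nonempty.1 hm))
    (fun j => 1 - χ j)
  have hχM : ∀ j, 1 - χ j ≤ M := fun j => le_sup' (fun j => 1 - χ j) (mem_univ j)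
  have hM : 0 < M := by linarith [hχM ⟨0, hm⟩, (hχ ⟨0, hm⟩).2]
  have hrec_succ : ∀ a i, Q (a + 1) i ≤ χ i *
      (∏ k : Fin (N i).card, (1 - χ (((N i).sort (· ≤ ·)).get
        (Fin.cast ((N i).length_sort (· ≤ ·)).symm k)))) *
      ∑ f ∈ Nat.antidiagonalTuple (N i).card a, ∏ k, Q (f k) (((N i).sort (· ≤ ·)).get
        (Fin.cast ((N i).length_sort (· ≤ ·)).symm k)) := fun a i => by
    have h := hrec (a + 1) le_add_self i
    rwa [Nat.add_sub_cancel, hp, ← prod_sort_get] at h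
  obtain ⟨n, rfl⟩ := Nat.exists_eq_add_of_le' hn
  simpa using le_mul_pow_of_recursion (fun j => (hχ j).1.le) (fun j => (hχ j).2.le) hM hχM
    hQ0 hQnonneg hrec_succ n i

/-- **Exponential decay of `Q_{n,i}` by direct induction.** If the nonnegative
reals `Q n i` (with `Q 0 j = 1`) satisfy
`Q n i ≤ p i * ∑_{n₁+⋯+n_l = n-1} ∏_k Q (n_k) (i_k)` where `N i = {i₁ < … < i_l}`
(`i ∈ N i`) and `p i = χ i ∏_{j ∈ N i} (1 - χ j)` with `χ j ∈ (0,1)`, then for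
every `n ≥ 1` and `i`, `Q n i ≤ χ i · M^(n-1)` where `M = max_j (1 - χ j)`. -/
theorem Q_exponential_decay {m : ℕ} (hm : 0 < m)
    (χ : Fin m → ℝ) (hχ : ∀ i, χ i ∈ Set.Ioo (0 : ℝ) 1)
    (N : Fin m → Finset (Fin m)) (hself : ∀ i, i ∈ N i)
    (p : Fin m → ℝ) (hp : ∀ i, p i = χ i * ∏ j ∈ N i, (1 - χ j))
    (Q : ℕ → Fin m → ℝ) (hQ0 : ∀ j, Q 0 j = 1) (hQnonneg : ∀ n i, 0 ≤ Q n i)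
    (hrec : ∀ (n : ℕ), 1 ≤ n → ∀ i : Fin m,
      Q n i ≤ p i *
        ∑ f ∈ Finset.Nat.antidiagonalTuple (N i).card (n - 1),
          ∏ k : Fin (N i).card,
            Q (f k) (((N i).sort (· ≤ ·)).get
              (Fin.cast ((N i).length_sort (· ≤ ·)).symm k))) :
    ∀ (n : ℕ), 1 ≤ n → ∀ i : Fin m,
      Q n i ≤ χ i *
        (Finset.univ.sup' (Finset.univ_nonempty_iff.2 (Fin.pos_iff_nonempty.1 hm))
          (fun j => 1 - χ j)) ^ (n - 1) :=
  Q_exponential_decay_general hm χ hχ N p hp Q hQ0 hQnonneg hrec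
end
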